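/- Let H be a bialgebra over a commutative ring R, F a Drinfel'd twist on H, and A an H-module algebra with star-product a ⋆ b := Σ_k f̄^k(a) · f̄_k(b). Then the H-action on A is compatible with the star-product through the twisted coproduct Δ_F(h) = F · Δ(h) · F⁻¹: writing Δ_F(h) = Σ h₍₁₎^F ⊗ h₍₂₎^F, one has ρ(h)(a ⋆ b) = Σ ρ(h₍₁₎^F)(a) ⋆ ρ(h₍₂₎^F)(b) for all h ∈ H and a, b ∈ A. -/

import Mathlib

open scoped TensorProduct

noncomputable section

/-- `Δ ⊗ id` as an algebra homomorphism `H ⊗ H → (H ⊗ H) ⊗ H`. -/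
def comulTensorId (R H : Type*) [CommRing R] [Ring H] [Bialgebra R H] :
    (H ⊗[R] H) →ₐ[R] (H ⊗[R] H) ⊗[R] H :=
  Algebra.TensorProduct.map (Bialgebra.comulAlgHom R H) (AlgHom.id R H)

/-- `id ⊗ Δ` as an algebra homomorphism `H ⊗ H → H ⊗ (H ⊗ H)`. -/
def idTensorComul (R H : Type*) [CommRing R] [Ring H] [Bialgebra R H] :
    (H ⊗[R] H) →ₐ[R] H ⊗[R] (H ⊗[R] H) :=
  Algebra.TensorProduct.map (AlgHom.id R H) (Bialgebra.comulAlgHom R H)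

/-- `F` is a Drinfel'd twist on the bialgebra `H` with two-sided inverse `Finv`:
it is invertible and satisfies the 2-cocycle condition
`(F ⊗ 1) · (Δ ⊗ id)(F) = (1 ⊗ F) · (id ⊗ Δ)(F)` in `H ⊗ H ⊗ H`. -/
def IsDrinfeldTwist (R : Type*) {H : Type*} [CommRing R] [Ring H] [Bialgebra R H]
    (F Finv : H ⊗[R] H) : Prop :=
  F * Finv = 1 ∧ Finv * F = 1 ∧
    (TensorProduct.assoc R H H H) ((F ⊗ₜ[R] (1 : H)) * comulTensorId R H F) =
      ((1 : H) ⊗ₜ[R] F) * idTensorComul R H F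

/-- The action of an element of `H ⊗ H` on `M ⊗ N`, acting with the first leg on `M`
and the second leg on `N` through the given representations. -/
def legAct {R H : Type*} [CommRing R] [Ring H] [Algebra R H]
    {M N : Type*} [AddCommGroup M] [Module R M] [AddCommGroup N] [Module R N]
    (ρM : H →ₐ[R] Module.End R M) (ρN : H →ₐ[R] Module.End R N) :
    H ⊗[R] H →ₗ[R] (M ⊗[R] N →ₗ[R] M ⊗[R] N) :=
  (TensorProduct.homTensorHomMap (RingHom.id R) M N M N).comp
    (TensorProduct.map ρM.toLinearMap ρN.toLinearMap)

/-- `ρ` makes the `R`-algebra `A` into an `H`-module algebra: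
`ρ(h)(a·b) = Σ ρ(h₍₁₎)(a) · ρ(h₍₂₎)(b)`. -/
def IsModuleAlgebra (R : Type*) {H A : Type*} [CommRing R] [Ring H] [Bialgebra R H]
    [Ring A] [Algebra R A] (ρ : H →ₐ[R] Module.End R A) : Prop :=
  ∀ (h : H) (a b : A),
    ρ h (a * b) =
      LinearMap.mul' R A (legAct ρ ρ (Coalgebra.comul (R := R) h) (a ⊗ₜ[R] b))

/-- The star-product `a ⋆ b := Σ f̄ᵏ(a) · f̄ₖ(b)`, as a linear map on `A ⊗ A`. -/
def starProd {R H A : Type*} [CommRing R] [Ring H] [Bialgebra R H] [Ring A] [Algebra R A]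
    (ρ : H →ₐ[R] Module.End R A) (Finv : H ⊗[R] H) : A ⊗[R] A →ₗ[R] A :=
  (LinearMap.mul' R A).comp (legAct ρ ρ Finv)

/-!
Acting through the legs of `H ⊗ H` is multiplicative, so `a ⋆ b` is the product of the action
of `F⁻¹` on `a ⊗ b`, and acting first by `Δ_F(h)` and then by `F⁻¹` is acting by
`F⁻¹ F Δ(h) F⁻¹ = Δ(h) F⁻¹`. The module-algebra axiom `ρ(h) ∘ mul = mul ∘ Δ(h)` finishes the proof.
-/

section LegAct

variable {R H : Type*} [CommRing R] [Ring H] [Algebra R H]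
    {M N : Type*} [AddCommGroup M] [Module R M] [AddCommGroup N] [Module R N]
    (ρM : H →ₐ[R] Module.End R M) (ρN : H →ₐ[R] Module.End R N)

lemma legAct_tmul (h k : H) :
    legAct ρM ρN (h ⊗ₜ[R] k) = TensorProduct.map (ρM h) (ρN k) :=
  TensorProduct.homTensorHomMap_apply (R := R) (M := M) (N := N) (M₂ := M) (N₂ := N) _ _

lemma legAct_mul (x y : H ⊗[R] H) :
    legAct ρM ρN (x * y) = (legAct ρM ρN x).comp (legAct ρM ρN y) := by
  induction x using TensorProduct.induction_on with
  | zero => simp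
  | add x₁ x₂ hx₁ hx₂ => simp only [add_mul, map_add, hx₁, hx₂, LinearMap.add_comp]
  | tmul h k =>
    induction y using TensorProduct.induction_on with
    | zero => simp
    | add y₁ y₂ hy₁ hy₂ => simp only [mul_add, map_add, hy₁, hy₂, LinearMap.comp_add]
    | tmul h' k' =>
      simp only [Algebra.TensorProduct.tmul_mul_tmul, legAct_tmul, map_mul,
        Module.End.mul_eq_comp, TensorProduct.map_comp]

end LegAct

section StarProd

variable {R H A : Type*} [CommRing R] [Ring H] [Bialgebra R H] [Ring A] [Algebra R A]
    {ρ : H →ₐ[R] Module.End R A}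

lemma IsModuleAlgebra.comp_mul' (hA : IsModuleAlgebra R ρ) (h : H) :
    (ρ h).comp (LinearMap.mul' R A) =
      (LinearMap.mul' R A).comp (legAct ρ ρ (Coalgebra.comul (R := R) h)) :=
  TensorProduct.ext' (hA h)

lemma starProd_comp_legAct (Finv x : H ⊗[R] H) :
    (starProd ρ Finv).comp (legAct ρ ρ x) =
      (LinearMap.mul' R A).comp (legAct ρ ρ (Finv * x)) := by
  rw [starProd, legAct_mul, LinearMap.comp_assoc]

end StarProd

/-- The `H`-action on an `H`-module algebra `A` is compatible with the
star-product through the twisted coproduct `Δ_F(h) = F · Δ(h) · F⁻¹`: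
`ρ(h)(a ⋆ b) = Σ ρ(h₍₁₎^F)(a) ⋆ ρ(h₍₂₎^F)(b)`. -/
theorem starProd_twisted_coproduct_compat
    (R : Type*) [CommRing R] (H : Type*) [Ring H] [Bialgebra R H]
    (A : Type*) [Ring A] [Algebra R A]
    (ρ : H →ₐ[R] Module.End R A) (hA : IsModuleAlgebra R ρ)
    (F Finv : H ⊗[R] H) (hF : IsDrinfeldTwist R F Finv) :
    ∀ (h : H) (a b : A),
      ρ h (starProd ρ Finv (a ⊗ₜ[R] b)) =
        starProd ρ Finv
          (legAct ρ ρ (F * Coalgebra.comul (R := R) h * Finv) (a ⊗ₜ[R] b)) := by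
  intro h a b
  have untwist : Finv * (F * Coalgebra.comul (R := R) h * Finv) =
      Coalgebra.comul (R := R) h * Finv := by
    rw [← mul_assoc, ← mul_assoc, hF.2.1, one_mul]
  have hcomp : (ρ h).comp (starProd ρ Finv) =
      (starProd ρ Finv).comp (legAct ρ ρ (F * Coalgebra.comul (R := R) h * Finv)) := by
    rw [starProd_comp_legAct, untwist, legAct_mul, starProd, ← LinearMap.comp_assoc,
      hA.comp_mul', LinearMap.comp_assoc]
  exact LinearMap.congr_fun hcomp (a ⊗ₜ[R] b)
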